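/- arXiv:2011.09532 — 6 statements merged into one kernel-verified Lean document; each statement's English description precedes it below -/
import Mathlib

section
/- Let (x_n) be a sequence of positive reals such that (1/n)·∑_{j=1}^n x_j → ∞ as n → ∞. Then ∑_{j=1}^n max(log x_j, 0) = o(∑_{j=1}^n x_j) as n → ∞. -/
/-!
Since `log⁺` is subadditive on products and `log⁺ u ≤ u` for `u ≥ 0`, every `M > 0` gives
`log⁺ x_j ≤ log⁺ M + x_j / M`. Summing, `∑ log⁺ x_j ≤ n log⁺ M + S_n / M`; the first term is
`o(S_n)` because `S_n / n → ∞`, and `M` can be taken arbitrarily large.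
-/

open Filter Asymptotics

namespace Asymptotics

theorem IsLittleO.of_forall_le_mul_add {α E F G : Type*} [Norm E] [Norm F]
    [SeminormedAddCommGroup G] {l : Filter α} {f : α → E} {g : α → F} {h : α → G} (hh : h =o[l] g)
    (hf : ∀ ε > 0, ∃ C, ∀ᶠ x in l, ‖f x‖ ≤ C * ‖h x‖ + ε * ‖g x‖) : f =o[l] g := by
  refine isLittleO_iff.2 fun c hc => ?_
  obtain ⟨C, hC⟩ := hf (c / 2) (half_pos hc)
  filter_upwards [hC, (hh.norm_left.const_mul_left C).def (half_pos hc)] with x hfx hhx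
  have hCh : C * ‖h x‖ ≤ c / 2 * ‖g x‖ := (Real.le_norm_self _).trans hhx
  linarith

theorem isLittleO_of_tendsto_div_atTop {α : Type*} {l : Filter α} {f g : α → ℝ}
    (hfg : Tendsto (fun x => g x / f x) l atTop) : f =o[l] g := by
  refine (isLittleO_iff_tendsto' ?_).2 ?_
  · filter_upwards [hfg.eventually_gt_atTop 0] with x hx hgx
    simp [hgx] at hx
  · exact hfg.inv_tendsto_atTop.congr fun x => inv_div (g x) (f x)

end Asymptotics

namespace Real

theorem posLog_le_posLog_add_div {M t : ℝ} (hM : 0 < M) (ht : 0 ≤ t) :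
    log⁺ t ≤ log⁺ M + t / M :=
  calc log⁺ t = log⁺ (M * (t / M)) := by rw [mul_div_cancel₀ t hM.ne']
    _ ≤ log⁺ M + log⁺ (t / M) := posLog_mul
    _ ≤ log⁺ M + t / M := by
      gcongr
      have htM : 0 ≤ t / M := div_nonneg ht hM.le
      exact max_le htM (log_le_self htM)

theorem sum_posLog_le {ι : Type*} (s : Finset ι) {x : ι → ℝ} (hx : ∀ j ∈ s, 0 ≤ x j) {M : ℝ}
    (hM : 0 < M) : ∑ j ∈ s, log⁺ (x j) ≤ log⁺ M * s.card + (∑ j ∈ s, x j) / M := by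
  calc ∑ j ∈ s, log⁺ (x j) ≤ ∑ j ∈ s, (log⁺ M + x j / M) :=
        Finset.sum_le_sum fun j hj => posLog_le_posLog_add_div hM (hx j hj)
    _ = log⁺ M * s.card + (∑ j ∈ s, x j) / M := by
        rw [Finset.sum_add_distrib, Finset.sum_const, Finset.sum_div, nsmul_eq_mul, mul_comm]

end Real

open Real in
theorem cesaro_logplus_littleO (x : ℕ → ℝ) (hx : ∀ n, 0 < x n)
    (h : Tendsto (fun n => (∑ j ∈ Finset.Icc 1 n, x j) / (n : ℝ)) atTop atTop) :
    (fun n => ∑ j ∈ Finset.Icc 1 n, max (Real.log (x j)) 0)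
      =o[atTop] (fun n => ∑ j ∈ Finset.Icc 1 n, x j) := by
  simp only [max_comm _ (0 : ℝ), ← posLog_apply]
  refine (isLittleO_of_tendsto_div_atTop h).of_forall_le_mul_add fun ε hε =>
    ⟨log⁺ ε⁻¹, Eventually.of_forall fun n => ?_⟩
  have hS : 0 ≤ ∑ j ∈ Finset.Icc 1 n, x j := Finset.sum_nonneg fun j _ => (hx j).le
  calc ‖∑ j ∈ Finset.Icc 1 n, log⁺ (x j)‖ = ∑ j ∈ Finset.Icc 1 n, log⁺ (x j) :=
        norm_of_nonneg (Finset.sum_nonneg fun j _ => posLog_nonneg)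
    _ ≤ log⁺ ε⁻¹ * n + (∑ j ∈ Finset.Icc 1 n, x j) / ε⁻¹ := by
        simpa using sum_posLog_le (Finset.Icc 1 n) (fun j _ => (hx j).le) (inv_pos.2 hε)
    _ = log⁺ ε⁻¹ * ‖(n : ℝ)‖ + ε * ‖∑ j ∈ Finset.Icc 1 n, x j‖ := by
        rw [norm_of_nonneg hS, Real.norm_natCast, div_inv_eq_mul, mul_comm ε]
end

section
/- Let U be a positive harmonic function on the right half-plane {z : Re z > 0} admitting the representation U(z) = c·x + (x/π)·∫_{−∞}^{∞} U(it)/|z − it|² dt for x = Re z > 0, where c ≥ 0 and U(it) ≥ 0 for all real t. Then the function x ↦ U(x)/x is antitone on (0, ∞). -/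
/-! On the positive real axis the representation reads
`U x / x = c + π⁻¹ ∫ g t / (x ^ 2 + t ^ 2) dt`, whose integrand decreases in `x` since `g ≥ 0`. -/

open MeasureTheory

lemma Complex.norm_ofReal_sub_ofReal_mul_I_sq (x t : ℝ) :
    ‖(x : ℂ) - t * Complex.I‖ ^ 2 = x ^ 2 + t ^ 2 := by
  rw [← Complex.normSq_eq_norm_sq, Complex.normSq_apply]
  simp only [Complex.sub_re, Complex.sub_im, Complex.ofReal_re, Complex.ofReal_im,
    Complex.re_ofReal_mul, Complex.im_ofReal_mul, Complex.I_re, Complex.I_im]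
  ring

lemma integral_div_sq_add_sq_le {g : ℝ → ℝ} (hg : ∀ t, 0 ≤ g t) {a b : ℝ} (ha : 0 < a)
    (hab : a ≤ b) (hint : Integrable (fun t : ℝ => g t / (a ^ 2 + t ^ 2))) :
    ∫ t : ℝ, g t / (b ^ 2 + t ^ 2) ≤ ∫ t : ℝ, g t / (a ^ 2 + t ^ 2) := by
  refine integral_mono_of_nonneg (.of_forall fun t => div_nonneg (hg t) (by positivity)) hint
    (.of_forall fun t => ?_)
  have hsq : a ^ 2 ≤ b ^ 2 := pow_le_pow_left₀ ha.le hab 2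
  exact div_le_div_of_nonneg_left (hg t) (by positivity) (by linarith)

theorem poisson_rep_div_antitone_general (U : ℂ → ℝ) (c : ℝ) (g : ℝ → ℝ)
    (hg : ∀ t, 0 ≤ g t)
    (hU : ∀ z : ℂ, 0 < z.re →
      U z = c * z.re + (z.re / Real.pi) * ∫ t : ℝ, g t / ‖z - t * Complex.I‖ ^ 2)
    (hint : ∀ z : ℂ, 0 < z.re →
      Integrable (fun t : ℝ => g t / ‖z - t * Complex.I‖ ^ 2)) :
    AntitoneOn (fun x : ℝ => U x / x) (Set.Ioi (0 : ℝ)) := by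
  have hUdiv : ∀ x : ℝ, 0 < x →
      U x / x = c + Real.pi⁻¹ * ∫ t : ℝ, g t / (x ^ 2 + t ^ 2) := by
    intro x hx
    rw [hU x (by simpa using hx), Complex.ofReal_re]
    simp only [Complex.norm_ofReal_sub_ofReal_mul_I_sq]
    field_simp
  intro a (ha : 0 < a) b (hb : 0 < b) hab
  have hinta : Integrable (fun t : ℝ => g t / (a ^ 2 + t ^ 2)) := by
    simpa only [Complex.norm_ofReal_sub_ofReal_mul_I_sq] using hint a (by simpa using ha)
  show U b / b ≤ U a / a
  rw [hUdiv a ha, hUdiv b hb]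
  gcongr c + _ * ?_
  exact integral_div_sq_add_sq_le hg ha hab hinta

theorem poisson_rep_div_antitone (U : ℂ → ℝ) (c : ℝ) (g : ℝ → ℝ)
    (hc : 0 ≤ c) (hg : ∀ t, 0 ≤ g t)
    (hU : ∀ z : ℂ, 0 < z.re →
      U z = c * z.re + (z.re / Real.pi) * ∫ t : ℝ, g t / ‖z - t * Complex.I‖ ^ 2)
    (hint : ∀ z : ℂ, 0 < z.re →
      Integrable (fun t : ℝ => g t / ‖z - t * Complex.I‖ ^ 2))
    (hUpos : ∀ z : ℂ, 0 < z.re → 0 < U z) :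
    AntitoneOn (fun x : ℝ => U x / x) (Set.Ioi (0 : ℝ)) :=
  poisson_rep_div_antitone_general U c g hg hU hint
end

section
/- Let z = x + iy with x < 0, |y| < 1/2, and suppose a, b are positive reals with b < |z|²/|x| < a, |z + b| > 1, |z + a| > 1, and |z| > b. Then |1 + z/b| ≥ 1/|z| and |1 + z/a| ≥ 1/(2|z|). -/
/-!
The hypotheses `b < ‖z‖` and `1 < ‖z + b‖` with `|im z|` small force the
translate `z + b` to stay in the left half-plane, so it is closer to `0` than `z`; hence
`1 < ‖z + b‖ < ‖z‖`. Both estimates are then elementary: `‖1 + z / c‖ = ‖z + c‖ / ‖c‖`, and for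
the second one either `‖c‖ ≤ 2‖z‖`, or the triangle inequality `‖z + c‖ ≥ ‖c‖ - ‖z‖` suffices.
-/

section NormedField

variable {𝕜 : Type*} [NormedField 𝕜]

lemma norm_one_add_div {z c : 𝕜} (hc : c ≠ 0) : ‖1 + z / c‖ = ‖z + c‖ / ‖c‖ := by
  rw [← norm_div, add_div, div_self hc, add_comm]

lemma one_div_norm_le_norm_one_add_div {z c : 𝕜} (hcz : ‖c‖ ≤ ‖z‖) (hzc : 1 ≤ ‖z + c‖) :
    1 / ‖z‖ ≤ ‖1 + z / c‖ := by
  rcases eq_or_ne c 0 with rfl | hc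
  · rw [add_zero] at hzc
    simpa using inv_le_one_of_one_le₀ hzc
  have hc0 : 0 < ‖c‖ := norm_pos_iff.mpr hc
  rw [norm_one_add_div hc, div_le_div_iff₀ (hc0.trans_le hcz) hc0]
  nlinarith

lemma one_div_two_mul_norm_le_norm_one_add_div {z c : 𝕜} (hz : 1 ≤ ‖z‖) (hzc : 1 ≤ ‖z + c‖) :
    1 / (2 * ‖z‖) ≤ ‖1 + z / c‖ := by
  rcases eq_or_ne c 0 with rfl | hc
  · rw [div_zero, add_zero, norm_one, div_le_one₀ (by positivity)]
    linarith
  rw [norm_one_add_div hc, div_le_div_iff₀ (by positivity) (norm_pos_iff.mpr hc)]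
  have htri : ‖c‖ - ‖z‖ ≤ ‖z + c‖ := by
    simpa [add_comm] using norm_sub_norm_le c (-z)
  rcases le_or_gt ‖c‖ (2 * ‖z‖) with hsmall | hlarge <;> nlinarith

end NormedField

namespace Complex

lemma sq_norm_eq_re_sq_add_im_sq (z : ℂ) : ‖z‖ ^ 2 = z.re ^ 2 + z.im ^ 2 := by
  rw [Complex.sq_norm, normSq_apply, sq, sq]

lemma sq_norm_add_ofReal (z : ℂ) (b : ℝ) : ‖z + b‖ ^ 2 = (z.re + b) ^ 2 + z.im ^ 2 := by
  simp [sq_norm_eq_re_sq_add_im_sq]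

lemma norm_add_ofReal_lt_norm {z : ℂ} {b : ℝ} (hb : 0 < b) (h : z.re + b < 0) :
    ‖z + b‖ < ‖z‖ := by
  rw [← sq_lt_sq₀ (norm_nonneg _) (norm_nonneg _), sq_norm_add_ofReal,
    sq_norm_eq_re_sq_add_im_sq]
  nlinarith

lemma re_add_ofReal_neg {z : ℂ} {b : ℝ} (hx : z.re ≤ 0) (hy : 2 * z.im ^ 2 ≤ 1)
    (hbz : b < ‖z‖) (hzb : 1 < ‖z + b‖) : z.re + b < 0 := by
  by_contra! h
  have hz : b ^ 2 < z.re ^ 2 + z.im ^ 2 := by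
    rw [← sq_norm_eq_re_sq_add_im_sq]
    exact pow_lt_pow_left₀ hbz (by linarith) two_ne_zero
  have hzb' : 1 < (z.re + b) ^ 2 + z.im ^ 2 := by
    rw [← sq_norm_add_ofReal]
    nlinarith
  -- with `u = -re z ≥ 0`: `(b - u) ^ 2 ≤ b ^ 2 - u ^ 2 < im z ^ 2 ≤ 1 / 2 ≤ 1 - im z ^ 2`
  nlinarith

end Complex

theorem omega_n_estimates_general (z : ℂ) (a b : ℝ)
    (hx : z.re < 0) (hy : |z.im| < 1 / 2)
    (hb : 0 < b)
    (hzb : 1 < ‖z + b‖) (hza : 1 < ‖z + a‖)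
    (hzgtb : b < ‖z‖) :
    1 / ‖z‖ ≤ ‖1 + z / b‖ ∧
      1 / (2 * ‖z‖) ≤ ‖1 + z / a‖ := by
  have him : 2 * z.im ^ 2 ≤ 1 := by
    nlinarith [sq_abs z.im, abs_nonneg z.im]
  have hre := Complex.re_add_ofReal_neg hx.le him hzgtb hzb
  have hz : 1 < ‖z‖ := hzb.trans (Complex.norm_add_ofReal_lt_norm hb hre)
  have hbz : ‖(b : ℂ)‖ ≤ ‖z‖ := by
    rw [Complex.norm_real, Real.norm_of_nonneg hb.le]
    exact hzgtb.le
  exact ⟨one_div_norm_le_norm_one_add_div hbz hzb.le,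
    one_div_two_mul_norm_le_norm_one_add_div hz.le hza.le⟩

theorem omega_n_estimates (z : ℂ) (a b : ℝ)
    (hx : z.re < 0) (hy : |z.im| < 1 / 2)
    (hb : 0 < b) (ha : 0 < a)
    (hmid : b < ‖z‖ ^ 2 / |z.re| ∧ ‖z‖ ^ 2 / |z.re| < a)
    (hzb : 1 < ‖z + b‖) (hza : 1 < ‖z + a‖)
    (hzgtb : b < ‖z‖) :
    1 / ‖z‖ ≤ ‖1 + z / b‖ ∧
      1 / (2 * ‖z‖) ≤ ‖1 + z / a‖ :=
  omega_n_estimates_general z a b hx hy hb hzb hza hzgtb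
end

section
/- Let u be a positive harmonic function on the annulus {z : r₁ < |z| < r₂} where 0 < r₁ < s₁ ≤ s₂ < r₂. Then there is a positive constant K, depending only on μ := min{log(s₁/r₁), log(r₂/s₂)}, such that u(z') ≤ K·u(z) whenever |z'| = |z| and s₁ ≤ |z| ≤ s₂. -/
/-!
On a disc `ball c R` a harmonic `u` is the real part of a holomorphic `F`. If `u > 0`, the
Borel–Carathéodory theorem applied to `F c - F (c + ·)` gives Harnack's inequality
`u z ≤ (R + |z - c|) / (R - |z - c|) * u c`, hence `u z ≤ 3 * u c` for `|z - c| ≤ R / 2`.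
When `s₁ ≤ ρ ≤ s₂`, every disc of radius `(1 - e^{-μ}) * ρ` centred on the circle `|z| = ρ` lies
in the annulus, and any two points of that circle are joined by `N = ⌈4π / (1 - e^{-μ})⌉` arcs of
length at most half that radius; chaining the disc estimates gives `K = 3 ^ N`.
-/
/-- `u` is harmonic on `s`: twice continuously differentiable (on a neighbourhood of each
point of `s`) with vanishing Laplacian at each point of `s`. -/
def HarmonicOnSet (u : ℂ → ℝ) (s : Set ℂ) : Prop :=
  ContDiffOn ℝ 2 u s ∧ ∀ z ∈ s,
    fderiv ℝ (fun w => fderiv ℝ u w 1) z 1 +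
      fderiv ℝ (fun w => fderiv ℝ u w Complex.I) z Complex.I = 0

open Complex InnerProductSpace Metric Set Real

theorem fderiv_fderiv_apply_eq_iteratedFDeriv_two {𝕜 E F : Type*} [NontriviallyNormedField 𝕜]
    [NormedAddCommGroup E] [NormedSpace 𝕜 E] [NormedAddCommGroup F] [NormedSpace 𝕜 F]
    {u : E → F} {z : E} (hu : ContDiffAt 𝕜 2 u z) (v w : E) :
    fderiv 𝕜 (fun y => fderiv 𝕜 u y v) z w = iteratedFDeriv 𝕜 2 u z ![w, v] := by
  rw [iteratedFDeriv_two_apply, fderiv_clm_apply (hu.fderiv_right (by norm_num) |>.differentiableAt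
    one_ne_zero) (differentiableAt_const v)]
  simp

theorem HarmonicOnSet.harmonicOnNhd {u : ℂ → ℝ} {s : Set ℂ} (hs : IsOpen s)
    (hu : HarmonicOnSet u s) : HarmonicOnNhd u s := by
  intro x hx
  refine ⟨hu.1.contDiffAt (hs.mem_nhds hx), ?_⟩
  filter_upwards [hs.mem_nhds hx] with y hy
  have hy2 : ContDiffAt ℝ 2 u y := hu.1.contDiffAt (hs.mem_nhds hy)
  simpa [laplacian_eq_iteratedFDeriv_complexPlane,
    ← fderiv_fderiv_apply_eq_iteratedFDeriv_two hy2] using hu.2 y hy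

theorem exists_chain_of_norm_eq {z z' : ℂ} (h : ‖z'‖ = ‖z‖) {N : ℕ} (hN : N ≠ 0) :
    ∃ w : ℕ → ℂ, w 0 = z ∧ w N = z' ∧ (∀ k, ‖w k‖ = ‖z‖) ∧
      ∀ k, dist (w (k + 1)) (w k) ≤ 2 * π * ‖z‖ / N := by
  set Δ := (arg z' - arg z) / N
  have hN' : (0 : ℝ) < N := by positivity
  refine ⟨fun k => ‖z‖ * exp (((arg z + k * Δ : ℝ) : ℂ) * I), ?_, ?_, fun k => ?_, fun k => ?_⟩
  · simp [norm_mul_exp_arg_mul_I z]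
  · have : arg z + N * Δ = arg z' := by rw [mul_div_cancel₀ _ hN'.ne']; ring
    simpa [this, h] using norm_mul_exp_arg_mul_I z'
  · simp [norm_exp]
  · have hΔ : |Δ| ≤ 2 * π / N := by
      rw [abs_div, Nat.abs_cast]
      gcongr
      have := abs_arg_le_pi z
      have := abs_arg_le_pi z'
      rw [abs_le] at *
      constructor <;> linarith
    have hstep : ((arg z + (k + 1 : ℕ) * Δ : ℝ) : ℂ) * I
        = ((arg z + k * Δ : ℝ) : ℂ) * I + I * Δ := by push_cast; ring
    dsimp only
    rw [dist_eq_norm, hstep, Complex.exp_add, ← mul_assoc, ← mul_sub_one, norm_mul, norm_mul]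
    simp only [norm_real, norm_norm, norm_exp_ofReal_mul_I, mul_one]
    calc ‖z‖ * ‖exp (I * Δ) - 1‖ ≤ ‖z‖ * |Δ| := by
          gcongr; exact norm_exp_I_mul_ofReal_sub_one_le
      _ ≤ ‖z‖ * (2 * π / N) := by gcongr
      _ = 2 * π * ‖z‖ / N := by ring

theorem ball_subset_annulus {r₁ r₂ μ : ℝ} {w : ℂ} (h₁ : Real.exp μ * r₁ ≤ ‖w‖)
    (h₂ : Real.exp μ * ‖w‖ ≤ r₂) :
    ball w ((1 - Real.exp (-μ)) * ‖w‖) ⊆ {z : ℂ | r₁ < ‖z‖ ∧ ‖z‖ < r₂} := by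
  intro x hx
  have hx' := (abs_norm_sub_norm_le x w).trans_lt (mem_ball_iff_norm.1 hx)
  rw [abs_lt] at hx'
  have hexp : Real.exp μ * Real.exp (-μ) = 1 := by rw [← Real.exp_add]; simp
  have hcosh : 2 ≤ Real.exp μ + Real.exp (-μ) := by
    have := Real.one_le_cosh μ
    rw [Real.cosh_eq] at this
    linarith
  have hw := norm_nonneg w
  constructor
  · nlinarith [Real.exp_pos (-μ)]
  · nlinarith

namespace InnerProductSpace.HarmonicOnNhd

theorem le_mul_of_mem_ball {u : ℂ → ℝ} {c z : ℂ} {R : ℝ}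
    (hu : HarmonicOnNhd u (ball c R)) (hpos : ∀ w ∈ ball c R, 0 < u w) (hz : z ∈ ball c R) :
    u z ≤ (R + dist z c) / (R - dist z c) * u c := by
  obtain ⟨F, hF, hFu⟩ := hu.exists_analyticOnNhd_ball_re_eq
  have hR : 0 < R := pos_of_mem_ball hz
  have hc : c ∈ ball c R := mem_ball_self hR
  have hshift : MapsTo (c + ·) (ball (0 : ℂ) R) (ball c R) := fun w hw => by
    simpa [dist_eq_norm] using hw
  set H : ℂ → ℂ := fun w => F c - F (c + w)
  have hH : DifferentiableOn ℂ H (ball 0 R) :=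
    (hF.differentiableOn.comp (differentiable_id.const_add c).differentiableOn hshift).const_sub _
  have hHre : MapsTo H (ball 0 R) {w | w.re ≤ u c} := fun w hw => by
    have := hpos _ (hshift hw)
    simp only [mem_ofPred_eq, sub_re, H, hFu hc, hFu (hshift hw)]
    linarith
  have hz' : z - c ∈ ball (0 : ℂ) R := by simpa [dist_eq_norm] using hz
  have hHz := borelCaratheodory_zero (hpos c hc) hH hHre hR hz' (by simp [H])
  have hzR : R - dist z c ≠ 0 := (sub_pos.2 (mem_ball.1 hz)).ne'
  calc u z = u c - (H (z - c)).re := by simp [H, hFu hz, hFu hc]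
    _ ≤ u c + ‖H (z - c)‖ := by linarith [neg_le_abs (H (z - c)).re, abs_re_le_norm (H (z - c))]
    _ ≤ u c + 2 * u c * dist z c / (R - dist z c) := by rw [dist_eq_norm]; linarith
    _ = (R + dist z c) / (R - dist z c) * u c := by field_simp; ring

theorem le_three_mul_of_dist_le_half {u : ℂ → ℝ} {c z : ℂ} {R : ℝ} (hR : 0 < R)
    (hu : HarmonicOnNhd u (ball c R)) (hpos : ∀ w ∈ ball c R, 0 < u w) (hz : dist z c ≤ R / 2) :
    u z ≤ 3 * u c := by
  have hzR : dist z c < R := by linarith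
  have hc : 0 < u c := hpos c (mem_ball_self hR)
  calc u z ≤ (R + dist z c) / (R - dist z c) * u c := hu.le_mul_of_mem_ball hpos hzR
    _ ≤ 3 * u c := by
      gcongr
      rw [div_le_iff₀ (by linarith)]
      linarith

theorem le_pow_mul_of_norm_eq {u : ℂ → ℝ} {s : Set ℂ} {ρ δ : ℝ} (hρ : 0 < ρ)
    (hδ : 0 < δ) (hu : HarmonicOnNhd u s) (hpos : ∀ w ∈ s, 0 < u w)
    (hball : ∀ w : ℂ, ‖w‖ = ρ → ball w (δ * ρ) ⊆ s) {z z' : ℂ} (hz : ‖z‖ = ρ) (hz' : ‖z'‖ = ρ) :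
    u z' ≤ 3 ^ ⌈4 * π / δ⌉₊ * u z := by
  set N := ⌈4 * π / δ⌉₊
  have hN : 4 * π / δ ≤ N := Nat.le_ceil _
  have hN0 : (0 : ℝ) < N := lt_of_lt_of_le (by positivity) hN
  obtain ⟨w, rfl, rfl, hw, hdist⟩ :=
    exists_chain_of_norm_eq (hz'.trans hz.symm) (Nat.cast_pos.1 hN0).ne'
  refine le_geom (u := fun k => u (w k)) zero_le_three N fun k _ => ?_
  have hsub := hball (w k) ((hw k).trans hz)
  refine (hu.mono hsub).le_three_mul_of_dist_le_half (by positivity)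
    (fun x hx => hpos x (hsub hx)) ((hdist k).trans ?_)
  rw [hz, div_le_iff₀ hN0]
  rw [div_le_iff₀ hδ] at hN
  nlinarith

end InnerProductSpace.HarmonicOnNhd

theorem harnack_annulus (μ : ℝ) (hμ : 0 < μ) :
    ∃ K > 0, ∀ (r₁ r₂ s₁ s₂ : ℝ) (u : ℂ → ℝ),
      0 < r₁ → r₁ < s₁ → s₁ ≤ s₂ → s₂ < r₂ →
      min (Real.log (s₁ / r₁)) (Real.log (r₂ / s₂)) = μ →
      HarmonicOnSet u {z : ℂ | r₁ < ‖z‖ ∧ ‖z‖ < r₂} →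
      (∀ z : ℂ, r₁ < ‖z‖ → ‖z‖ < r₂ → 0 < u z) →
      ∀ z z' : ℂ, ‖z'‖ = ‖z‖ →
        s₁ ≤ ‖z‖ → ‖z‖ ≤ s₂ → u z' ≤ K * u z := by
  refine ⟨3 ^ ⌈4 * π / (1 - Real.exp (-μ))⌉₊, by positivity, ?_⟩
  intro r₁ r₂ s₁ s₂ u hr₁ hr₁s₁ hs₁s₂ hs₂r₂ hmin hu hpos z z' hzz' hs₁ hs₂
  have hδ : 0 < 1 - Real.exp (-μ) := by simpa using hμ
  have h₁ : Real.exp μ * r₁ ≤ s₁ := by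
    rw [← le_div_iff₀ hr₁, ← Real.le_log_iff_exp_le (div_pos (by linarith) hr₁), ← hmin]
    exact min_le_left _ _
  have h₂ : Real.exp μ * s₂ ≤ r₂ := by
    rw [← le_div_iff₀ (by linarith),
      ← Real.le_log_iff_exp_le (div_pos (by linarith) (by linarith)), ← hmin]
    exact min_le_right _ _
  have hopen : IsOpen {z : ℂ | r₁ < ‖z‖ ∧ ‖z‖ < r₂} :=
    (isOpen_lt continuous_const continuous_norm).inter (isOpen_lt continuous_norm continuous_const)
  refine (hu.harmonicOnNhd hopen).le_pow_mul_of_norm_eq (by linarith) hδ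
    (fun w hw => hpos w hw.1 hw.2) (fun w hw => ?_) rfl hzz'
  rw [← hw]
  exact ball_subset_annulus (by linarith) (by rw [hw]; nlinarith [Real.exp_pos μ])
end

section
/- Let E = ⋃_{n≥0} [a_n, b_n] ⊂ (0, ∞) with 0 < a₀ < b₀ < a₁ < b₁ < ⋯, a_n → ∞, and suppose (1/n)·∑_{j=0}^{n−1} log(a_{j+1}/a_j) → ∞ as n → ∞. Then ∑_{j=0}^{n−1} log⁺(log(a_{j+1}/a_j)) = o(log a_n) as n → ∞. -/
open Filter Asymptotics Finset

/-! With `x_j = log (a_{j+1} / a_j) ≥ 0`, the elementary bound `log⁺ x ≤ ε x + |log ε|` gives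
`∑_{j<n} log⁺ x_j ≤ ε ∑_{j<n} x_j + |log ε| n`, and the Cesàro hypothesis makes `n` negligible
against `∑_{j<n} x_j`, which telescopes to `log a_n - log a_0 ~ log a_n`. -/

lemma max_log_zero_le_mul_add_abs_log {ε x : ℝ} (hε : 0 < ε) (hx : 0 ≤ x) :
    max (Real.log x) 0 ≤ ε * x + |Real.log ε| := by
  refine max_le ?_ (by positivity)
  rcases hx.eq_or_lt with rfl | hx
  · simp
  · have := Real.log_le_sub_one_of_pos (mul_pos hε hx)
    rw [Real.log_mul hε.ne' hx.ne'] at this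
    linarith [neg_abs_le (Real.log ε)]

lemma tendsto_atTop_of_tendsto_div_natCast {f : ℕ → ℝ}
    (hf : Tendsto (fun n => f n / n) atTop atTop) : Tendsto f atTop atTop := by
  refine (hf.atTop_mul_atTop₀ tendsto_natCast_atTop_atTop).congr' ?_
  filter_upwards [eventually_ne_atTop 0] with n hn
  field_simp

theorem isLittleO_sum_max_log_zero {x : ℕ → ℝ} (hx : ∀ j, 0 ≤ x j)
    (hcesaro : Tendsto (fun n => (∑ j ∈ range n, x j) / n) atTop atTop) :
    (fun n => ∑ j ∈ range n, max (Real.log (x j)) 0) =o[atTop]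
      fun n => ∑ j ∈ range n, x j := by
  refine isLittleO_iff.2 fun c hc => ?_
  obtain ⟨ε, rfl⟩ : ∃ ε, c = 2 * ε := ⟨c / 2, by ring⟩
  have hε : 0 < ε := by linarith
  filter_upwards [hcesaro.eventually_ge_atTop (|Real.log ε| / ε), eventually_gt_atTop 0]
    with n hn hn0
  have hcount : |Real.log ε| * n ≤ ε * ∑ j ∈ range n, x j := by
    rw [div_le_div_iff₀ hε (by positivity)] at hn
    linarith
  have hsum : ∑ j ∈ range n, max (Real.log (x j)) 0
      ≤ ε * ∑ j ∈ range n, x j + |Real.log ε| * n :=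
    calc ∑ j ∈ range n, max (Real.log (x j)) 0
        ≤ ∑ j ∈ range n, (ε * x j + |Real.log ε|) :=
          sum_le_sum fun j _ => max_log_zero_le_mul_add_abs_log hε (hx j)
      _ = ε * ∑ j ∈ range n, x j + |Real.log ε| * n := by
          rw [sum_add_distrib, ← mul_sum, sum_const, card_range, nsmul_eq_mul, mul_comm _ (n : ℝ)]
  rw [Real.norm_of_nonneg (sum_nonneg fun j _ => le_max_right _ _),
    Real.norm_of_nonneg (sum_nonneg fun j _ => hx j)]
  linarith

lemma sum_range_log_div_succ {a : ℕ → ℝ} (ha : ∀ n, 0 < a n) (n : ℕ) :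
    ∑ j ∈ range n, Real.log (a (j + 1) / a j) = Real.log (a n) - Real.log (a 0) := by
  simp only [fun j => Real.log_div (ha (j + 1)).ne' (ha j).ne']
  exact sum_range_sub (fun j => Real.log (a j)) n

lemma isEquivalent_sub_const {α : Type*} {l : Filter α} {f : α → ℝ}
    (hf : Tendsto f l atTop) (c : ℝ) : (fun x => f x - c) ~[l] f :=
  (IsEquivalent.refl (u := f)).sub_isLittleO
    (isLittleO_const_left.2 (Or.inr (tendsto_norm_atTop_atTop.comp hf)))

theorem logplus_sum_littleO_general (a b : ℕ → ℝ)
    (h0 : 0 < a 0)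
    (hinter : ∀ n, a n < b n ∧ b n < a (n + 1))
    (hcesaro : Tendsto
      (fun n => (∑ j ∈ Finset.range n, Real.log (a (j + 1) / a j)) / (n : ℝ)) atTop atTop) :
    (fun n => ∑ j ∈ Finset.range n, max (Real.log (Real.log (a (j + 1) / a j))) 0)
      =o[atTop] fun n => Real.log (a n) := by
  have hmono : StrictMono a := strictMono_nat_of_lt_succ fun n => (hinter n).1.trans (hinter n).2
  have hpos : ∀ n, 0 < a n := fun n => h0.trans_le (hmono.monotone n.zero_le)
  have hstep : ∀ j, 0 ≤ Real.log (a (j + 1) / a j) := fun j =>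
    Real.log_nonneg ((one_le_div (hpos j)).2 (hmono j.lt_succ_self).le)
  have htel := sum_range_log_div_succ hpos
  have hlog : Tendsto (fun n => Real.log (a n)) atTop atTop := by
    have := tendsto_atTop_of_tendsto_div_natCast hcesaro
    simp only [htel] at this
    simpa using tendsto_atTop_add_const_right _ (Real.log (a 0)) this
  refine (isLittleO_sum_max_log_zero hstep hcesaro).trans_isBigO ?_
  simp only [htel]
  exact (isEquivalent_sub_const hlog _).isBigO

theorem logplus_sum_littleO (a b : ℕ → ℝ)
    (h0 : 0 < a 0)
    (hinter : ∀ n, a n < b n ∧ b n < a (n + 1))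
    (hlim : Tendsto a atTop atTop)
    (hcesaro : Tendsto
      (fun n => (∑ j ∈ Finset.range n, Real.log (a (j + 1) / a j)) / (n : ℝ)) atTop atTop) :
    (fun n => ∑ j ∈ Finset.range n, max (Real.log (Real.log (a (j + 1) / a j))) 0)
      =o[atTop] fun n => Real.log (a n) :=
  logplus_sum_littleO_general a b h0 hinter hcesaro
end

section
/- Define for a measurable set S ⊆ (1, ∞) the upper logarithmic density Λ̄(S) = limsup_{r→∞} (1/log r)·∫_{S ∩ (1,r)} dt/t. Let E* = ⋃_{n≥0} [a_n, b_n] with 1 ≤ a₀ < b₀ < a₁ < ⋯, a_n → ∞, and let E' = ⋃_{n≥0} [a_n/2, 2b_n]. If n = o(log a_n) as n → ∞, then Λ̄(E') = Λ̄(E*). -/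
open Filter MeasureTheory Asymptotics

/-- Upper logarithmic density of a set `S ⊆ (1,∞)`. -/
noncomputable def upperLogDensity (S : Set ℝ) : ℝ :=
  limsup (fun r => (∫ t in S ∩ Set.Ioo 1 r, 1 / t) / Real.log r) atTop

/-!
Measured with `dt/t`, each of the intervals `[a_n/2, a_n]` and `[b_n, 2 b_n]` that `E'` adds to
`E*` has mass at most `log 2`, and the intervals of `E'` meeting `(1, r)` have `a_n ≤ 2r`. The
hypothesis `n = o(log a_n)` says there are `o(log r)` such indices, so up to `r` the two sets
differ by `o(log r)` in logarithmic measure, which is invisible after dividing by `log r`.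
-/

open Set

theorem limsup_eq_of_le_of_forall_le_add {α : Type*} {l : Filter α} [NeBot l]
    {f g : α → ℝ} (hf : IsCoboundedUnder (· ≤ ·) l f) (hg : IsBoundedUnder (· ≤ ·) l g)
    (hfg : f ≤ᶠ[l] g)
    (hgf : ∀ ε > 0, ∀ᶠ x in l, g x ≤ f x + ε) : limsup g l = limsup f l := by
  have hf' : IsBoundedUnder (· ≤ ·) l f := hg.mono_le hfg
  have hg' : IsCoboundedUnder (· ≤ ·) l g := by
    obtain ⟨c, hc⟩ := hf.frequently_ge
    exact .of_frequently_ge (hc.mp (hfg.mono fun x hx hcx => hcx.trans hx))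
  refine le_antisymm (le_of_forall_pos_le_add fun ε hε => ?_) (limsup_le_limsup hfg hf hg)
  calc limsup g l ≤ limsup (fun x => f x + ε) l := limsup_le_limsup (hgf ε hε) hg'
        (isBoundedUnder_le_add hf' isBoundedUnder_const)
    _ = limsup f l + ε := limsup_add_const l f ε hf' hf

noncomputable def logMeasure : Measure ℝ := volume.withDensity fun t => ENNReal.ofReal (1 / t)

theorem logMeasure_Iic_zero : logMeasure (Iic 0) = 0 := by
  rw [logMeasure, withDensity_apply _ measurableSet_Iic,
    setLIntegral_congr_fun measurableSet_Iic fun t ht =>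
      ENNReal.ofReal_eq_zero.2 (one_div_nonpos.2 ht)]
  exact lintegral_zero

theorem logMeasure_Icc {c d : ℝ} (hc : 0 < c) (hcd : c ≤ d) :
    logMeasure (Icc c d) = ENNReal.ofReal (Real.log d - Real.log c) := by
  have hpos : ∀ t ∈ Icc c d, 0 < t := fun t ht => hc.trans_le ht.1
  have hint : IntegrableOn (fun t : ℝ => 1 / t) (Icc c d) :=
    (continuousOn_const.div continuousOn_id fun t ht => (hpos t ht).ne').integrableOn_Icc
  rw [logMeasure, withDensity_apply _ measurableSet_Icc,
    ← ofReal_integral_eq_lintegral_ofReal hint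
      (ae_restrict_of_forall_mem measurableSet_Icc fun t ht => (one_div_pos.2 (hpos t ht)).le),
    integral_Icc_eq_integral_Ioc, ← intervalIntegral.integral_of_le hcd,
    integral_one_div (notMem_uIcc_of_lt hc (hc.trans_le hcd)),
    Real.log_div (hc.trans_le hcd).ne' hc.ne']

theorem logMeasure_Icc_two_mul_le (c : ℝ) :
    logMeasure (Icc c (2 * c)) ≤ ENNReal.ofReal (Real.log 2) := by
  rcases le_or_gt c 0 with hc | hc
  · calc logMeasure (Icc c (2 * c)) ≤ logMeasure (Iic 0) :=
          measure_mono fun t ht => ht.2.trans (by linarith)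
      _ = 0 := logMeasure_Iic_zero
      _ ≤ _ := zero_le
  · rw [logMeasure_Icc hc (by linarith), Real.log_mul two_ne_zero hc.ne', add_sub_cancel_right]

theorem logMeasure_Icc_half_le (c : ℝ) :
    logMeasure (Icc (c / 2) c) ≤ ENNReal.ofReal (Real.log 2) := by
  simpa [mul_div_cancel₀] using logMeasure_Icc_two_mul_le (c / 2)

theorem logMeasure_inter_Ioo_le (S : Set ℝ) {r : ℝ} (hr : 1 ≤ r) :
    logMeasure (S ∩ Ioo 1 r) ≤ ENNReal.ofReal (Real.log r) := by
  calc logMeasure (S ∩ Ioo 1 r) ≤ logMeasure (Icc 1 r) :=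
        measure_mono (inter_subset_right.trans Ioo_subset_Icc_self)
    _ = ENNReal.ofReal (Real.log r) := by rw [logMeasure_Icc one_pos hr, Real.log_one, sub_zero]

theorem logMeasure_inter_Ioo_ne_top (S : Set ℝ) {r : ℝ} (hr : 1 ≤ r) :
    logMeasure (S ∩ Ioo 1 r) ≠ ⊤ :=
  ((logMeasure_inter_Ioo_le S hr).trans_lt ENNReal.ofReal_lt_top).ne

theorem logMeasure_real_inter_Ioo_le (S : Set ℝ) {r : ℝ} (hr : 1 ≤ r) :
    logMeasure.real (S ∩ Ioo 1 r) ≤ Real.log r :=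
  ENNReal.toReal_le_of_le_ofReal (Real.log_nonneg hr) (logMeasure_inter_Ioo_le S hr)

theorem setIntegral_one_div_eq_logMeasure_real {s : Set ℝ} (hs : MeasurableSet s)
    (h : s ⊆ Ici 0) : ∫ t in s, 1 / t = logMeasure.real s := by
  rw [integral_eq_lintegral_of_nonneg_ae
      (ae_restrict_of_forall_mem hs fun t ht => one_div_nonneg.2 (h ht)) (by fun_prop),
    measureReal_def, logMeasure, withDensity_apply _ hs]

theorem upperLogDensity_eq_limsup_logMeasure_real {S : Set ℝ} (hS : MeasurableSet S) :
    upperLogDensity S =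
      limsup (fun r => logMeasure.real (S ∩ Ioo 1 r) / Real.log r) atTop := by
  unfold upperLogDensity
  congr! 3 with r
  exact setIntegral_one_div_eq_logMeasure_real (hS.inter measurableSet_Ioo)
    fun t ht => zero_le_one.trans ht.2.1.le

theorem eventually_forall_natCast_add_one_le_mul_log {a : ℕ → ℝ}
    (hlim : Tendsto a atTop atTop)
    (hno : (fun n : ℕ => (n : ℝ)) =o[atTop] fun n => Real.log (a n)) {ε : ℝ} (hε : 0 < ε) :
    ∀ᶠ r in atTop, ∀ n, a n ≤ r → (n : ℝ) + 1 ≤ ε * Real.log r := by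
  have hlog : Tendsto (fun n => Real.log (a n)) atTop atTop := Real.tendsto_log_atTop.comp hlim
  have hsucc : (fun n : ℕ => (n : ℝ) + 1) =o[atTop] fun n => Real.log (a n) :=
    hno.add (isLittleO_const_left.2 (.inr (tendsto_norm_atTop_atTop.comp hlog)))
  obtain ⟨N, hN⟩ := eventually_atTop.1 ((hsucc.bound hε).and (hlim.eventually_ge_atTop 1))
  filter_upwards [(Real.tendsto_log_atTop.const_mul_atTop hε).eventually_ge_atTop (N : ℝ)]
    with r hr n hn
  rcases lt_or_ge n N with hnN | hnN
  · exact le_trans (by exact_mod_cast hnN) hr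
  · obtain ⟨hbound, ha1⟩ := hN n hnN
    rw [Real.norm_of_nonneg (by positivity), Real.norm_of_nonneg (Real.log_nonneg ha1)] at hbound
    exact hbound.trans (mul_le_mul_of_nonneg_left (Real.log_le_log (by linarith) hn) hε.le)

section Thickening

variable (a b : ℕ → ℝ) {r : ℝ}

theorem iUnion_Icc_inter_Ioo_subset_thickened :
    (⋃ n, Icc (a n) (b n)) ∩ Ioo 1 r ⊆ (⋃ n, Icc (a n / 2) (2 * b n)) ∩ Ioo 1 r := by
  rintro x ⟨hx, hx1, hxr⟩
  obtain ⟨n, hxa, hxb⟩ := mem_iUnion.1 hx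
  exact ⟨mem_iUnion.2 ⟨n, by linarith, by linarith⟩, hx1, hxr⟩

theorem iUnion_Icc_thickened_inter_Ioo_subset {M : ℕ} (hM : ∀ n, a n ≤ 2 * r → n < M) :
    (⋃ n, Icc (a n / 2) (2 * b n)) ∩ Ioo 1 r ⊆ (⋃ n, Icc (a n) (b n)) ∩ Ioo 1 r ∪
      ⋃ n ∈ Finset.range M, (Icc (a n / 2) (a n) ∪ Icc (b n) (2 * b n)) := by
  rintro x ⟨hx, hx1, hxr⟩
  obtain ⟨n, hn⟩ := mem_iUnion.1 hx
  have hnM : n ∈ Finset.range M := Finset.mem_range.2 (hM n (by linarith [hn.1]))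
  rcases Icc_subset_Icc_union_Icc.trans (union_subset_union_right _ Icc_subset_Icc_union_Icc) hn
    with h | h | h
  · exact .inr (mem_biUnion hnM (.inl h))
  · exact .inl ⟨mem_iUnion.2 ⟨n, h⟩, hx1, hxr⟩
  · exact .inr (mem_biUnion hnM (.inr h))

theorem logMeasure_real_thickened_inter_Ioo_le {M : ℕ} (hr : 1 ≤ r)
    (hM : ∀ n, a n ≤ 2 * r → n < M) :
    logMeasure.real ((⋃ n, Icc (a n / 2) (2 * b n)) ∩ Ioo 1 r) ≤
      logMeasure.real ((⋃ n, Icc (a n) (b n)) ∩ Ioo 1 r) + M * (2 * Real.log 2) := by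
  have hle : logMeasure ((⋃ n, Icc (a n / 2) (2 * b n)) ∩ Ioo 1 r) ≤
      logMeasure ((⋃ n, Icc (a n) (b n)) ∩ Ioo 1 r) + M * (2 * ENNReal.ofReal (Real.log 2)) :=
    calc _ ≤ logMeasure ((⋃ n, Icc (a n) (b n)) ∩ Ioo 1 r) + ∑ n ∈ Finset.range M,
          logMeasure (Icc (a n / 2) (a n) ∪ Icc (b n) (2 * b n)) :=
        (measure_mono (iUnion_Icc_thickened_inter_Ioo_subset a b hM)).trans
          ((measure_union_le _ _).trans (add_le_add_right (measure_biUnion_finset_le _ _) _))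
      _ ≤ logMeasure ((⋃ n, Icc (a n) (b n)) ∩ Ioo 1 r) + ∑ n ∈ Finset.range M,
          2 * ENNReal.ofReal (Real.log 2) := by
        gcongr with n
        exact (measure_union_le _ _).trans
          (two_mul (ENNReal.ofReal _) ▸ add_le_add (logMeasure_Icc_half_le _)
            (logMeasure_Icc_two_mul_le _))
      _ = _ := by rw [Finset.sum_const, Finset.card_range, nsmul_eq_mul]
  have h := ENNReal.toReal_le_add hle (logMeasure_inter_Ioo_ne_top _ hr) (by finiteness)
  simpa [measureReal_def, Real.log_nonneg one_le_two] using h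

theorem eventually_logMeasure_real_thickened_div_log_le (hlim : Tendsto a atTop atTop)
    (hno : (fun n : ℕ => (n : ℝ)) =o[atTop] fun n => Real.log (a n)) {ε : ℝ} (hε : 0 < ε) :
    ∀ᶠ r in atTop,
      logMeasure.real ((⋃ n, Icc (a n / 2) (2 * b n)) ∩ Ioo 1 r) / Real.log r ≤
        logMeasure.real ((⋃ n, Icc (a n) (b n)) ∩ Ioo 1 r) / Real.log r + ε := by
  have hlog2 : 0 < Real.log 2 := Real.log_pos one_lt_two
  -- at most `2 δ log r` indices matter, each costing `2 log 2`
  set δ := ε / (4 * Real.log 2)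
  have hδ : 0 < δ := by positivity
  have hδε : δ * (4 * Real.log 2) = ε := div_mul_cancel₀ _ (by positivity)
  filter_upwards [(tendsto_id.const_mul_atTop two_pos).eventually
      (eventually_forall_natCast_add_one_le_mul_log hlim hno hδ), eventually_ge_atTop 2]
    with r hcount hr
  have hlog : 0 < Real.log r := Real.log_pos (by linarith)
  have hlog2r : Real.log (2 * r) ≤ 2 * Real.log r := by
    rw [Real.log_mul two_ne_zero (by linarith)]
    linarith [Real.log_le_log two_pos hr]
  have hM : ∀ n, a n ≤ 2 * r → n < ⌊2 * δ * Real.log r⌋₊ := fun n hn =>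
    Nat.lt_of_succ_le <| Nat.le_floor <| by
      push_cast
      calc (n : ℝ) + 1 ≤ δ * Real.log (2 * r) := hcount n hn
        _ ≤ 2 * δ * Real.log r := by nlinarith
  have hMle : (⌊2 * δ * Real.log r⌋₊ : ℝ) * (2 * Real.log 2) ≤ ε * Real.log r :=
    calc _ ≤ 2 * δ * Real.log r * (2 * Real.log 2) := by
          gcongr
          exact Nat.floor_le (by positivity)
      _ = ε * Real.log r := by rw [← hδε]; ring
  rw [div_add' _ _ _ hlog.ne', div_le_div_iff_of_pos_right hlog]
  linarith [logMeasure_real_thickened_inter_Ioo_le a b (by linarith : (1 : ℝ) ≤ r) hM]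

end Thickening

theorem upperLogDensity_thickened_general (a b : ℕ → ℝ)
    (hlim : Tendsto a atTop atTop)
    (hno : (fun n : ℕ => (n : ℝ)) =o[atTop] fun n : ℕ => Real.log (a n)) :
    upperLogDensity (⋃ n, Set.Icc (a n / 2) (2 * b n)) =
      upperLogDensity (⋃ n, Set.Icc (a n) (b n)) := by
  have hmeas : ∀ c d : ℕ → ℝ, MeasurableSet (⋃ n, Icc (c n) (d n)) :=
    fun _ _ => .iUnion fun _ => measurableSet_Icc
  rw [upperLogDensity_eq_limsup_logMeasure_real (hmeas _ _),
    upperLogDensity_eq_limsup_logMeasure_real (hmeas _ _)]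
  refine limsup_eq_of_le_of_forall_le_add ?_ ?_ ?_
    fun ε hε => eventually_logMeasure_real_thickened_div_log_le a b hlim hno hε
  · refine isCoboundedUnder_le_of_eventually_le atTop (x := 0) ?_
    filter_upwards [eventually_ge_atTop 1] with r hr
    exact div_nonneg measureReal_nonneg (Real.log_nonneg hr)
  · refine isBoundedUnder_of_eventually_le (a := 1) ?_
    filter_upwards [eventually_gt_atTop 1] with r hr
    exact div_le_one_of_le₀ (logMeasure_real_inter_Ioo_le _ hr.le) (Real.log_nonneg hr.le)
  · filter_upwards [eventually_gt_atTop 1] with r hr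
    exact div_le_div_of_nonneg_right
      (measureReal_mono (iUnion_Icc_inter_Ioo_subset_thickened a b)
        (logMeasure_inter_Ioo_ne_top _ hr.le)) (Real.log_nonneg hr.le)

theorem upperLogDensity_thickened (a b : ℕ → ℝ)
    (h0 : 1 ≤ a 0)
    (hinter : ∀ n, a n < b n ∧ b n < a (n + 1))
    (hlim : Tendsto a atTop atTop)
    (hno : (fun n : ℕ => (n : ℝ)) =o[atTop] fun n : ℕ => Real.log (a n)) :
    upperLogDensity (⋃ n, Set.Icc (a n / 2) (2 * b n)) =
      upperLogDensity (⋃ n, Set.Icc (a n) (b n)) :=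
  upperLogDensity_thickened_general a b hlim hno
end
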